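/- There is an absolute constant C such that for every nonzero q ∈ Z[i], every real N ≥ 1 and every sequence of complex numbers (a_n)_{n ∈ Z[i]}, one has ∑_{r mod q, (r,q)=1} |∑_{n ∈ Z[i], N(n) ≤ N} a_n · e(Tr(n·r/(2q)))|² ≤ C · (N(q) + N) · ∑_{n ∈ Z[i], N(n) ≤ N} |a_n|². -/

import Mathlib

/-!
The phase `n ↦ e(Re(n r / q))` depends only on `r mod q`, so the sum over a reduced residue
system is at most the sum over all of `ℤ[i]/(q)`. On this finite ring `x ↦ e(Re(x / q))` is a
primitive additive character, so by Parseval that sum is `|ℤ[i]/(q)|` times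
`∑_y |∑_{n ≡ y} a_n|²`. Cauchy–Schwarz in each residue class, which meets the disc `N(n) ≤ N`
in `O(N / N(q) + 1)` points, together with `|ℤ[i]/(q)| = O(N(q))`, gives the bound.
-/

noncomputable section

/-- `e(t) = exp(2πit)`. -/
def e2pi (t : ℝ) : ℂ := Complex.exp (2 * Real.pi * Complex.I * t)

/-- `T` is a reduced residue system modulo `q` in `ℤ[i]`: the reduction map is injective
on `T` and its image is exactly the set of units of `ℤ[i]/(q)`. -/
def IsRRS (q : GaussianInt) (T : Finset GaussianInt) : Prop :=
  Set.InjOn (fun r => Ideal.Quotient.mk (Ideal.span {q}) r) ↑T ∧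
  (fun r => Ideal.Quotient.mk (Ideal.span {q}) r) '' ↑T = {x | IsUnit x}

/-- The inner exponential sum `∑_{n ∈ ℤ[i], N(n) ≤ N} a_n e(Tr(n r /(2q)))`,
where `Tr(x) = 2 Re x`. -/
def sieveTerm (a : GaussianInt → ℂ) (N : ℝ) (q r : GaussianInt) : ℂ :=
  ∑ᶠ n ∈ {n : GaussianInt | (Zsqrtd.norm n : ℝ) ≤ N},
    a n * e2pi (2 * (GaussianInt.toComplex (n * r) / (2 * GaussianInt.toComplex q)).re)

/-- `Z = ∑_{N(n) ≤ N} |a_n|²`. -/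
def Zsum (a : GaussianInt → ℂ) (N : ℝ) : ℝ :=
  ∑ᶠ n ∈ {n : GaussianInt | (Zsqrtd.norm n : ℝ) ≤ N}, ‖a n‖ ^ 2

open Finset
open scoped ComplexConjugate

local notation "ℤ[i]" => GaussianInt

namespace AddChar

variable {R K : Type*} [CommRing R] [Fintype R] [RCLike K] {ψ : AddChar R K}

theorem IsPrimitive.sum_norm_sq_sum_mul (hψ : ψ.IsPrimitive) (A : R → K) :
    ∑ x, ‖∑ y, A y * ψ (y * x)‖ ^ 2 = Fintype.card R * ∑ y, ‖A y‖ ^ 2 := by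
  classical
  have expand : ∀ x, ((‖∑ y, A y * ψ (y * x)‖ ^ 2 : ℝ) : K)
      = ∑ y, ∑ z, A y * conj (A z) * ψ (x * (y - z)) := by
    intro x
    rw [RCLike.ofReal_pow, ← RCLike.mul_conj, map_sum, sum_mul_sum]
    refine sum_congr rfl fun y _ => sum_congr rfl fun z _ => ?_
    rw [map_mul (starRingEnd K), ← map_neg_eq_conj, show x * (y - z) = y * x + -(z * x) by ring,
      map_add_eq_mul]
    ring
  apply RCLike.ofReal_injective (K := K)
  rw [RCLike.ofReal_sum, sum_congr rfl fun x _ => expand x]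
  calc ∑ x, ∑ y, ∑ z, A y * conj (A z) * ψ (x * (y - z))
      = ∑ y, ∑ z, A y * conj (A z) * ∑ x, ψ (x * (y - z)) := by
        rw [sum_comm]
        refine sum_congr rfl fun y _ => ?_
        rw [sum_comm]
        simp only [mul_sum]
    _ = _ := by
        simp only [sum_mulShift _ hψ, sub_eq_zero, Nat.cast_ite, Nat.cast_zero, mul_ite, mul_zero,
          sum_ite_eq, mem_univ, if_true, mul_sum, RCLike.ofReal_sum, RCLike.ofReal_mul,
          RCLike.ofReal_natCast, RCLike.ofReal_pow, ← RCLike.mul_conj]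
        exact sum_congr rfl fun y _ => mul_comm _ _

theorem IsPrimitive.sum_norm_sq_sum_le [DecidableEq R] {ι : Type*} (hψ : ψ.IsPrimitive)
    (s : Finset ι) (f : ι → R) (a : ι → K) {M : ℝ} (hM : ∀ y, (#{n ∈ s | f n = y} : ℝ) ≤ M) :
    ∑ x, ‖∑ n ∈ s, a n * ψ (f n * x)‖ ^ 2 ≤ Fintype.card R * M * ∑ n ∈ s, ‖a n‖ ^ 2 := by
  have regroup : ∀ x, ∑ n ∈ s, a n * ψ (f n * x)
      = ∑ y, (∑ n ∈ s with f n = y, a n) * ψ (y * x) := fun x => by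
    rw [← sum_fiberwise s f]
    refine sum_congr rfl fun y _ => ?_
    rw [sum_mul]
    exact sum_congr rfl fun n hn => by rw [(mem_filter.mp hn).2]
  have fiber : ∀ y, ‖∑ n ∈ s with f n = y, a n‖ ^ 2 ≤ M * ∑ n ∈ s with f n = y, ‖a n‖ ^ 2 :=
    fun y => calc
      _ ≤ (∑ n ∈ s with f n = y, ‖a n‖) ^ 2 := by gcongr; exact norm_sum_le _ _
      _ ≤ #{n ∈ s | f n = y} * ∑ n ∈ s with f n = y, ‖a n‖ ^ 2 := sq_sum_le_card_mul_sum_sq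
      _ ≤ M * ∑ n ∈ s with f n = y, ‖a n‖ ^ 2 := by gcongr; exact hM y
  simp_rw [regroup, hψ.sum_norm_sq_sum_mul, mul_assoc]
  gcongr
  calc ∑ y, ‖∑ n ∈ s with f n = y, a n‖ ^ 2 ≤ ∑ y, M * ∑ n ∈ s with f n = y, ‖a n‖ ^ 2 :=
        sum_le_sum fun y _ => fiber y
    _ = M * ∑ n ∈ s, ‖a n‖ ^ 2 := by rw [← mul_sum, sum_fiberwise]

end AddChar

lemma e2pi_add (s t : ℝ) : e2pi (s + t) = e2pi s * e2pi t := by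
  rw [e2pi, e2pi, e2pi, ← Complex.exp_add]
  push_cast
  ring_nf

lemma e2pi_eq_one_iff {t : ℝ} : e2pi t = 1 ↔ ∃ n : ℤ, (n : ℝ) = t := by
  have h2πi : 2 * (Real.pi : ℂ) * Complex.I ≠ 0 := by simp [Real.pi_ne_zero]
  rw [e2pi, Complex.exp_eq_one_iff]
  refine exists_congr fun n => ⟨fun h => ?_, fun h => by rw [← h]; push_cast; ring⟩
  exact_mod_cast (mul_left_cancel₀ h2πi (h.trans (mul_comm _ _))).symm

lemma abs_le_floor_sqrt_of_sq_le {x : ℤ} {K : ℝ} (h : (x : ℝ) ^ 2 ≤ K) : |x| ≤ ⌊√K⌋ :=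
  Int.le_floor.mpr (by push_cast; exact Real.abs_le_sqrt h)

namespace GaussianInt

def divChar (q : ℤ[i]) : AddChar ℤ[i] ℂ where
  toFun w := e2pi ((w : ℂ) / q).re
  map_zero_eq_one' := by simp [e2pi]
  map_add_eq_mul' w w' := by rw [toComplex_add, add_div, Complex.add_re, e2pi_add]

lemma divChar_apply (q w : ℤ[i]) : divChar q w = e2pi ((w : ℂ) / q).re := rfl

lemma divChar_eq_one_of_dvd {q w : ℤ[i]} (h : q ∣ w) : divChar q w = 1 := by
  obtain ⟨m, rfl⟩ := h
  rcases eq_or_ne q 0 with rfl | hq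
  · simp
  rw [divChar_apply, toComplex_mul, mul_div_cancel_left₀ _ (toComplex_eq_zero.not.mpr hq),
    e2pi_eq_one_iff]
  exact ⟨m.re, intCast_re m⟩

lemma dvd_of_divChar_eq_one {q c : ℤ[i]} (hq : q ≠ 0) (h₁ : divChar q c = 1)
    (hI : divChar q (c * ⟨0, 1⟩) = 1) : q ∣ c := by
  rw [divChar_apply, e2pi_eq_one_iff] at h₁ hI
  obtain ⟨x, hx⟩ := h₁
  obtain ⟨y, hy⟩ := hI
  refine ⟨⟨x, -y⟩, ?_⟩
  rw [← toComplex_inj, toComplex_mul, eq_comm, mul_comm,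
    ← eq_div_iff (toComplex_eq_zero.not.mpr hq)]
  rw [toComplex_mul, toComplex_def' 0 1, mul_comm, mul_div_assoc] at hy
  apply Complex.ext <;> simp [← hx, hy]

def quotChar (q : ℤ[i]) : AddChar (ℤ[i] ⧸ Ideal.span {q}) ℂ where
  toFun := Quotient.lift (divChar q) fun w w' h => by
    rw [← sub_add_cancel w w', AddChar.map_add_eq_mul,
      divChar_eq_one_of_dvd (Ideal.mem_span_singleton.mp ((Submodule.quotientRel_def _).mp h)),
      one_mul]
  map_zero_eq_one' := (divChar q).map_zero_eq_one
  map_add_eq_mul' x y := by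
    obtain ⟨w, rfl⟩ := Ideal.Quotient.mk_surjective x
    obtain ⟨w', rfl⟩ := Ideal.Quotient.mk_surjective y
    exact (divChar q).map_add_eq_mul w w'

@[simp]
lemma quotChar_mk (q w : ℤ[i]) : quotChar q (Ideal.Quotient.mk _ w) = divChar q w := rfl

lemma isPrimitive_quotChar {q : ℤ[i]} (hq : q ≠ 0) : (quotChar q).IsPrimitive := by
  intro b hb hψ
  obtain ⟨c, rfl⟩ := Ideal.Quotient.mk_surjective b
  refine hb (Ideal.Quotient.eq_zero_iff_dvd _ _ |>.mpr (dvd_of_divChar_eq_one hq ?_ ?_))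
  · simpa using DFunLike.congr_fun hψ 1
  · simpa [← map_mul] using DFunLike.congr_fun hψ (Ideal.Quotient.mk _ ⟨0, 1⟩)


lemma norm_eq_sq_add_sq (n : ℤ[i]) : n.norm = n.re ^ 2 + n.im ^ 2 := by
  rw [Zsqrtd.norm_def]
  ring

lemma norm_sub_le_two_mul (a b : ℤ[i]) : (a - b).norm ≤ 2 * (a.norm + b.norm) := by
  simp only [norm_eq_sq_add_sq, Zsqrtd.re_sub, Zsqrtd.im_sub]
  nlinarith [sq_nonneg (a.re + b.re), sq_nonneg (a.im + b.im)]

def ball (K : ℝ) : Finset ℤ[i] :=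
  ((Icc (-⌊√K⌋) ⌊√K⌋ ×ˢ Icc (-⌊√K⌋) ⌊√K⌋).image fun p => (⟨p.1, p.2⟩ : ℤ[i])).filter
    fun n => (n.norm : ℝ) ≤ K

@[simp]
lemma mem_ball {K : ℝ} {n : ℤ[i]} : n ∈ ball K ↔ (n.norm : ℝ) ≤ K := by
  refine ⟨fun h => (mem_filter.mp h).2, fun h => mem_filter.mpr ⟨?_, h⟩⟩
  have hn : (n.re : ℝ) ^ 2 + (n.im : ℝ) ^ 2 ≤ K := by exact_mod_cast norm_eq_sq_add_sq n ▸ h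
  have hre := abs_le.mp (abs_le_floor_sqrt_of_sq_le (x := n.re) (by nlinarith))
  have him := abs_le.mp (abs_le_floor_sqrt_of_sq_le (x := n.im) (by nlinarith))
  exact mem_image.mpr ⟨(n.re, n.im), by simp [hre, him], rfl⟩

lemma card_ball_le {K : ℝ} (hK : 0 ≤ K) : (#(ball K) : ℝ) ≤ 6 * K + 3 := by
  set B := ⌊√K⌋
  have hB : (0 : ℝ) ≤ B := by exact_mod_cast Int.floor_nonneg.mpr (Real.sqrt_nonneg K)
  have hIcc : (#(Icc (-B) B) : ℝ) = 2 * B + 1 := by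
    have hB' : -B ≤ B + 1 := by exact_mod_cast (by linarith : (-B : ℝ) ≤ B + 1)
    exact_mod_cast (Int.card_Icc_of_le _ _ hB').trans (by ring)
  have hsqrt : 2 * √K ≤ K + 1 := by nlinarith [Real.sq_sqrt hK, sq_nonneg (√K - 1)]
  calc (#(ball K) : ℝ) ≤ #(Icc (-B) B ×ˢ Icc (-B) B) := by
        exact_mod_cast (card_filter_le _ _).trans card_image_le
    _ = (2 * B + 1) ^ 2 := by rw [card_product, Nat.cast_mul, hIcc, sq]
    _ ≤ (2 * √K + 1) ^ 2 := by gcongr; exact Int.floor_le _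
    _ ≤ 6 * K + 3 := by nlinarith [Real.sq_sqrt hK]

lemma finsum_mem_norm_le_eq_sum_ball {M : Type*} [AddCommMonoid M] (f : ℤ[i] → M) (K : ℝ) :
    ∑ᶠ n ∈ {n : ℤ[i] | (n.norm : ℝ) ≤ K}, f n = ∑ n ∈ ball K, f n := by
  rw [← finsum_mem_coe_finset]
  congr
  ext n
  simp

variable {q : ℤ[i]}

lemma exists_mem_ball_mk_eq (hq : q ≠ 0) (x : ℤ[i] ⧸ Ideal.span {q}) :
    ∃ r ∈ ball q.norm, Ideal.Quotient.mk _ r = x := by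
  obtain ⟨w, rfl⟩ := Ideal.Quotient.mk_surjective x
  refine ⟨w % q, mem_ball.mpr (by exact_mod_cast (norm_mod_lt w hq).le), ?_⟩
  rw [EuclideanDomain.mod_eq_sub_mul_div, map_sub, map_mul, Ideal.Quotient.mk_singleton_self,
    zero_mul, sub_zero]

lemma finite_quotient (hq : q ≠ 0) : Finite (ℤ[i] ⧸ Ideal.span {q}) :=
  Finite.of_surjective (fun r : ball q.norm => Ideal.Quotient.mk _ (r : ℤ[i])) fun x => by
    obtain ⟨r, hr, rfl⟩ := exists_mem_ball_mk_eq hq x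
    exact ⟨⟨r, hr⟩, rfl⟩

lemma card_quotient_le [Fintype (ℤ[i] ⧸ Ideal.span {q})] (hq : q ≠ 0) :
    (Fintype.card (ℤ[i] ⧸ Ideal.span {q}) : ℝ) ≤ 6 * q.norm + 3 := by
  refine le_trans ?_ (card_ball_le (by exact_mod_cast q.norm_nonneg))
  exact_mod_cast card_le_card_of_surjOn (fun r => Ideal.Quotient.mk _ r)
    fun x _ => exists_mem_ball_mk_eq hq x

lemma card_filter_mk_eq_le_card_ball [DecidableEq (ℤ[i] ⧸ Ideal.span {q})] (hq : q ≠ 0) (N : ℝ)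
    (y : ℤ[i] ⧸ Ideal.span {q}) :
    #{n ∈ ball N | Ideal.Quotient.mk _ n = y} ≤ #(ball (4 * N / q.norm)) := by
  rcases eq_empty_or_nonempty {n ∈ ball N | Ideal.Quotient.mk _ n = y} with h | ⟨n₀, hn₀⟩
  · simp [h]
  have hnq : (0 : ℝ) < q.norm := by exact_mod_cast norm_pos.mpr hq
  have hdiv : ∀ m ∈ {n ∈ ball N | Ideal.Quotient.mk _ n = y}, q * ((m - n₀) / q) = m - n₀ :=
    fun m hm => by
      refine EuclideanDomain.mul_div_cancel' hq (Ideal.mem_span_singleton.mp ?_)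
      rw [← Ideal.Quotient.mk_eq_mk_iff_sub_mem, (mem_filter.mp hm).2, (mem_filter.mp hn₀).2]
  refine card_le_card_of_injOn (fun m => (m - n₀) / q) (fun m hm => ?_) fun m hm m' hm' h => ?_
  · have hm_norm : (((m - n₀) / q).norm : ℝ) * q.norm ≤ 4 * N := by
      have hsub : ((m - n₀).norm : ℝ) ≤ 2 * (m.norm + n₀.norm) := by
        exact_mod_cast norm_sub_le_two_mul m n₀
      rw [← Int.cast_mul, ← Zsqrtd.norm_mul, mul_comm, hdiv m hm]
      linarith [mem_ball.mp (mem_filter.mp hm).1, mem_ball.mp (mem_filter.mp hn₀).1]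
    exact mem_ball.mpr ((le_div_iff₀ hnq).mpr hm_norm)
  · have := congrArg (q * ·) h
    simp only [hdiv m hm, hdiv m' hm'] at this
    exact sub_left_injective this

lemma card_filter_mk_eq_le [DecidableEq (ℤ[i] ⧸ Ideal.span {q})] (hq : q ≠ 0) {N : ℝ}
    (hN : 0 ≤ N) (y : ℤ[i] ⧸ Ideal.span {q}) :
    (#{n ∈ ball N | Ideal.Quotient.mk _ n = y} : ℝ) ≤ 24 * N / q.norm + 3 := calc
  _ ≤ (#(ball (4 * N / q.norm)) : ℝ) := by exact_mod_cast card_filter_mk_eq_le_card_ball hq N y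
  _ ≤ 6 * (4 * N / q.norm) + 3 := card_ball_le (by have := q.norm_nonneg; positivity)
  _ = 24 * N / q.norm + 3 := by ring

end GaussianInt

open GaussianInt

lemma sieveTerm_eq_sum (a : ℤ[i] → ℂ) (N : ℝ) (q r : ℤ[i]) :
    sieveTerm a N q r =
      ∑ n ∈ ball N, a n * quotChar q (Ideal.Quotient.mk _ n * Ideal.Quotient.mk _ r) := by
  rw [sieveTerm, finsum_mem_norm_le_eq_sum_ball]
  refine sum_congr rfl fun n _ => ?_
  rw [← map_mul, quotChar_mk, divChar_apply, mul_comm 2 (q : ℂ), ← div_div, Complex.div_ofNat_re,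
    mul_div_cancel₀ _ two_ne_zero]

/-- Large sieve bound for an individual modulus `q ∈ ℤ[i] \ {0}`. -/
theorem largeSieve_gaussian_individual :
    ∃ C : ℝ, 0 < C ∧ ∀ q : GaussianInt, q ≠ 0 → ∀ N : ℝ, 1 ≤ N →
      ∀ (a : GaussianInt → ℂ) (T : Finset GaussianInt), IsRRS q T →
      (∑ r ∈ T, ‖sieveTerm a N q r‖ ^ 2)
        ≤ C * ((Zsqrtd.norm q : ℝ) + N) * Zsum a N := by
  classical
  refine ⟨216, by norm_num, fun q hq N hN a T hT => ?_⟩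
  have := finite_quotient hq
  let _ := Fintype.ofFinite (ℤ[i] ⧸ Ideal.span {q})
  set mk := Ideal.Quotient.mk (Ideal.span {q})
  have hnq : (1 : ℝ) ≤ q.norm := by exact_mod_cast norm_pos.mpr hq
  have hZ : 0 ≤ Zsum a N := by
    rw [Zsum, finsum_mem_norm_le_eq_sum_ball]
    positivity
  calc ∑ r ∈ T, ‖sieveTerm a N q r‖ ^ 2
      = ∑ x ∈ T.image mk, ‖∑ n ∈ ball N, a n * quotChar q (mk n * x)‖ ^ 2 := by
        rw [sum_image hT.1]
        exact sum_congr rfl fun r _ => by rw [sieveTerm_eq_sum]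
    _ ≤ ∑ x, ‖∑ n ∈ ball N, a n * quotChar q (mk n * x)‖ ^ 2 :=
        sum_le_univ_sum_of_nonneg fun _ => by positivity
    _ ≤ Fintype.card (ℤ[i] ⧸ Ideal.span {q}) * (24 * N / q.norm + 3) * Zsum a N := by
        rw [Zsum, finsum_mem_norm_le_eq_sum_ball]
        exact (isPrimitive_quotChar hq).sum_norm_sq_sum_le _ _ _
          (card_filter_mk_eq_le hq (by linarith))
    _ ≤ 9 * q.norm * (24 * N / q.norm + 3) * Zsum a N := by
        gcongr
        linarith [card_quotient_le hq]
    _ ≤ 216 * (q.norm + N) * Zsum a N := by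
        rw [mul_assoc 9, mul_add, mul_div_cancel₀ _ (by positivity)]
        nlinarith
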